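/- arXiv:1207.6147 — 2 statements merged into one kernel-verified Lean document; each statement's English description precedes it below -/
import Mathlib

section
/- Let Y be a compact metrizable space, Z ⊆ Y a closed subspace, and φ : Z → ℕ† a continuous map to the one-point compactification of discrete ℕ. Then φ extends to a continuous map Y → ℕ† if and only if for each n ∈ ℕ, the clopen subset φ⁻¹({n}) of Z is the intersection of Z with a clopen subset of Y. -/
/-!
Disjointify the given clopen sets `Vₙ` to clopen sets `Wₙ`; since the fibres `φ⁻¹({n})` are
already disjoint, this does not change their traces on `Z`. Sending `Wₙ` to `n` and the rest of
`Y` to `∞` is continuous: the preimage of a neighbourhood of `∞` is the complement of finitely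
many `Wₙ`, as a compact subset of discrete `ℕ` is finite.
-/

open Set

/-- A map `f : Z → X` on a closed subspace `Z` of `Y` extends to a continuous map on `Y`. -/
def ExtendsTo {X Y : Type*} [TopologicalSpace X] [TopologicalSpace Y]
    (Z : Set Y) (f : C(Z, X)) : Prop :=
  ∃ g : C(Y, X), ∀ z : Z, g z.1 = f z

open Function

theorem preimage_disjointed {α β ι : Type*} [Preorder ι] [LocallyFiniteOrderBot ι]
    (f : α → β) (V : ι → Set β) (i : ι) :
    f ⁻¹' disjointed V i = disjointed (fun j ↦ f ⁻¹' V j) i := by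
  simp only [disjointed_eq_inter_compl, preimage_inter, preimage_iInter, preimage_compl]

theorem IsClopen.disjointed {Y ι : Type*} [TopologicalSpace Y] [Preorder ι]
    [LocallyFiniteOrderBot ι] {V : ι → Set Y} (hV : ∀ i, IsClopen (V i)) (i : ι) :
    IsClopen (disjointed V i) :=
  disjointedRec (p := IsClopen) (fun _ j ht ↦ ht.diff (hV j)) (hV i)

namespace OnePoint

variable {X α : Type*}

theorem isClopen_singleton_coe [TopologicalSpace X] [DiscreteTopology X] (x : X) :
    IsClopen ({(x : OnePoint X)} : Set (OnePoint X)) :=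
  ⟨isClosed_singleton, by
    rw [← image_singleton]
    exact isOpen_image_coe.2 (isOpen_discrete _)⟩

theorem image_coe_preimage_of_infty_notMem {s : Set (OnePoint X)} (h : ∞ ∉ s) :
    (↑) '' ((↑) ⁻¹' s : Set X) = s :=
  image_preimage_eq_of_subset (compl_infty (X := X) ▸ subset_compl_singleton_iff.2 h)

theorem funext_of_preimage_coe {f g : α → OnePoint X}
    (h : ∀ x : X, f ⁻¹' {(x : OnePoint X)} = g ⁻¹' {(x : OnePoint X)}) : f = g := by
  funext a
  have key : ∀ x : X, f a = x ↔ g a = x := fun x ↦ Set.ext_iff.mp (h x) a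
  cases hf : f a with
  | infty =>
    cases hg : g a with
    | infty => rfl
    | coe x => simp [← key x, hf] at hg
  | coe x => exact ((key x).1 hf).symm

open Classical in
noncomputable def indexMap (W : X → Set α) (a : α) : OnePoint X :=
  if h : ∃ x, a ∈ W x then (h.choose : OnePoint X) else ∞

variable {W : X → Set α}

theorem indexMap_of_mem (hW : Pairwise (Disjoint on W)) {a : α} {x : X} (ha : a ∈ W x) :
    indexMap W a = x := by
  have hex : ∃ y, a ∈ W y := ⟨x, ha⟩
  rw [indexMap, dif_pos hex, coe_eq_coe]
  exact hW.eq (not_disjoint_iff.2 ⟨a, hex.choose_spec, ha⟩)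

theorem indexMap_of_forall_notMem {a : α} (ha : ∀ x, a ∉ W x) : indexMap W a = ∞ :=
  dif_neg (not_exists.2 ha)

theorem preimage_indexMap_coe (hW : Pairwise (Disjoint on W)) (x : X) :
    indexMap W ⁻¹' {(x : OnePoint X)} = W x := by
  ext a
  simp only [mem_preimage, mem_singleton_iff]
  refine ⟨fun h ↦ ?_, indexMap_of_mem hW⟩
  by_cases hex : ∃ y, a ∈ W y
  · obtain ⟨y, hy⟩ := hex
    obtain rfl : y = x := coe_injective ((indexMap_of_mem hW hy).symm.trans h)
    exact hy
  · simp [indexMap_of_forall_notMem (not_exists.1 hex)] at h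

theorem preimage_indexMap_image_coe (hW : Pairwise (Disjoint on W)) (s : Set X) :
    indexMap W ⁻¹' ((↑) '' s) = ⋃ x ∈ s, W x := by
  simp only [image_eq_iUnion, preimage_iUnion, preimage_indexMap_coe hW]

theorem continuous_indexMap [TopologicalSpace α] [TopologicalSpace X] [DiscreteTopology X]
    (hW : Pairwise (Disjoint on W)) (hWc : ∀ x, IsClopen (W x)) : Continuous (indexMap W) := by
  refine continuous_def.2 fun s hs ↦ ?_
  by_cases hinf : ∞ ∈ s
  · have hfin : ((↑) ⁻¹' s : Set X)ᶜ.Finite :=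
      ((isOpen_iff_of_mem' hinf).1 hs).1.finite_of_discrete
    rw [← isClosed_compl_iff, ← preimage_compl,
      ← image_coe_preimage_of_infty_notMem (notMem_compl_iff.2 hinf), preimage_compl,
      preimage_indexMap_image_coe hW]
    exact hfin.isClosed_biUnion fun x _ ↦ (hWc x).isClosed
  · rw [← image_coe_preimage_of_infty_notMem hinf, preimage_indexMap_image_coe hW]
    exact isOpen_biUnion fun x _ ↦ (hWc x).isOpen

end OnePoint

theorem onePoint_nat_extension_iff_general {Y : Type*} [MetricSpace Y]
    (Z : Set Y) (φ : C(Z, OnePoint ℕ)) :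
    ExtendsTo Z φ ↔
      ∀ n : ℕ, ∃ V : Set Y, IsClopen V ∧
        ((Subtype.val ⁻¹' V : Set Z) = φ ⁻¹' {((n : ℕ) : OnePoint ℕ)}) := by
  constructor
  · rintro ⟨g, hg⟩ n
    refine ⟨g ⁻¹' {(n : OnePoint ℕ)},
      (OnePoint.isClopen_singleton_coe n).preimage g.continuous, ?_⟩
    ext z
    simp [hg z]
  · intro h
    choose V hVc hV using h
    have hWd : Pairwise (Disjoint on disjointed V) := disjoint_disjointed V
    have hφ : Pairwise (Disjoint on fun n : ℕ ↦ φ ⁻¹' {(n : OnePoint ℕ)}) := fun m n hmn ↦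
      (disjoint_singleton.2 (OnePoint.coe_injective.ne hmn)).preimage φ
    have hW : ∀ n, Subtype.val ⁻¹' disjointed V n = φ ⁻¹' {(n : OnePoint ℕ)} := fun n ↦ by
      rw [preimage_disjointed, funext hV, disjointed_eq_self fun m hm ↦ hφ hm.ne]
    refine ⟨⟨OnePoint.indexMap (disjointed V),
      OnePoint.continuous_indexMap hWd (IsClopen.disjointed hVc)⟩, fun z ↦ ?_⟩
    refine congrFun (OnePoint.funext_of_preimage_coe
      (f := OnePoint.indexMap (disjointed V) ∘ Subtype.val) fun n ↦ ?_) z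
    rw [preimage_comp, OnePoint.preimage_indexMap_coe hWd, hW]

/-- A map `φ : Z → ℕ†` extends to `Y` iff every `φ⁻¹({n})` is the intersection with `Z`
of a clopen subset of `Y` (the clopen intersection property). -/
theorem onePoint_nat_extension_iff {Y : Type*} [MetricSpace Y] [CompactSpace Y]
    (Z : Set Y) (hZ : IsClosed Z) (φ : C(Z, OnePoint ℕ)) :
    ExtendsTo Z φ ↔
      ∀ n : ℕ, ∃ V : Set Y, IsClopen V ∧
        ((Subtype.val ⁻¹' V : Set Z) = φ ⁻¹' {((n : ℕ) : OnePoint ℕ)}) :=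
  onePoint_nat_extension_iff_general Z φ
end

section
/- Let X be a compact metrizable ANR with a fixed metric ρ, let Y be compact metrizable, Z ⊆ Y closed, and suppose continuous maps φₙ : Z → X converge uniformly on Z to φ, with φ extending to φ̄ : Y → X. Then for all sufficiently large n there exist extensions φ̄ₙ : Y → X of φₙ such that φ̄ₙ → φ̄ uniformly on Y. -/
open Set Filter

/-- `X` is an ANR: every map into `X` from a closed subspace of a compact metrizable space
extends to an open neighborhood. -/
def IsANR (X : Type*) [TopologicalSpace X] : Prop :=
  ∀ (Y : Type) [MetricSpace Y] [CompactSpace Y] (Z : Set Y), IsClosed Z →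
    ∀ φ : C(Z, X), ∃ U : Set Y, IsOpen U ∧ Z ⊆ U ∧
      ∃ g : C(U, X), ∀ (y : Y) (hz : y ∈ Z) (hu : y ∈ U), g ⟨y, hu⟩ = φ ⟨y, hz⟩

/-!
Put the whole sequence into one map on a closed subset of the compact metrizable space
`OnePoint ℕ × Y`: `φₙ` on `{n} × Z` and `φ̄` on `{∞} × Y`. Uniform convergence `φₙ → φ` is exactly
continuity of this map at `∞`. The ANR property extends it to an open neighbourhood of
`OnePoint ℕ × Z ∪ {∞} × Y`, which by the tube lemma contains `V × Y` for a neighbourhood `V` of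
`∞`; for `n ∈ V` the slices at `n` extend `φₙ`, and they converge uniformly to the slice `φ̄` at
`∞` because `Y` is compact.
-/

open Topology OnePoint

theorem IsANR.exists_continuousOn_extension {X : Type} [TopologicalSpace X] (hX : IsANR X)
    {T : Type} [TopologicalSpace T] [TopologicalSpace.MetrizableSpace T] [CompactSpace T]
    {A : Set T} (hA : IsClosed A) {f : T → X} (hf : ContinuousOn f A) :
    ∃ U : Set T, IsOpen U ∧ A ⊆ U ∧ ∃ g : T → X, ContinuousOn g U ∧ EqOn g f A := by
  classical
  let _ : MetricSpace T := TopologicalSpace.metrizableSpaceMetric T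
  obtain ⟨U, hU, hAU, g, hg⟩ := hX T A hA ⟨A.domRestrict f, hf.domRestrict⟩
  refine ⟨U, hU, hAU, fun t => if h : t ∈ U then g ⟨t, h⟩ else f t, ?_, fun t ht => ?_⟩
  · rw [continuousOn_iff_continuous_domRestrict]
    convert g.continuous using 1
    funext t
    exact dif_pos t.2
  · simp only [dif_pos (hAU ht), hg t ht]
    rfl

theorem tendsto_coe_onePoint_nat : Tendsto ((↑) : ℕ → OnePoint ℕ) atTop (𝓝 ∞) :=
  (continuous_iff_from_nat id).mp continuous_id

theorem TendstoUniformly.continuous_uncurry_onePoint {Z X : Type*} [TopologicalSpace Z]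
    [CompactSpace Z] [T2Space Z] [UniformSpace X] {φ : ℕ → C(Z, X)} {φl : C(Z, X)}
    (hconv : TendstoUniformly (fun n => ⇑(φ n)) (⇑φl) atTop) :
    Continuous fun p : OnePoint ℕ × Z => p.1.elim φl φ p.2 := by
  have hΦ : Continuous fun t : OnePoint ℕ => t.elim φl φ :=
    (continuous_iff_from_nat _).mpr (ContinuousMap.tendsto_iff_tendstoUniformly.mpr hconv)
  exact ContinuousMap.continuous_uncurry_of_continuous ⟨_, hΦ⟩

theorem exists_continuousOn_onePoint_prod_of_tendstoUniformly {X Y : Type*} [UniformSpace X]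
    [TopologicalSpace Y] [CompactSpace Y] [T2Space Y] {Z : Set Y} (hZ : IsClosed Z)
    {φ : ℕ → C(Z, X)} {φl : C(Z, X)} (hconv : TendstoUniformly (fun n => ⇑(φ n)) (⇑φl) atTop)
    {φbar : C(Y, X)} (hφbar : ∀ z : Z, φbar z = φl z) :
    ∃ f : OnePoint ℕ × Y → X, ContinuousOn f (univ ×ˢ Z ∪ {∞} ×ˢ univ) ∧
      (∀ (n : ℕ) (z : Z), f (n, z) = φ n z) ∧ ∀ y, f (∞, y) = φbar y := by
  classical
  have := isCompact_iff_compactSpace.mp hZ.isCompact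
  set f : OnePoint ℕ × Y → X :=
    fun p => if h : p.2 ∈ Z then p.1.elim φl φ ⟨p.2, h⟩ else φbar p.2
  have hf_infty : ∀ y, f (∞, y) = φbar y := fun y => by
    by_cases hy : y ∈ Z
    · simp [f, hy, hφbar ⟨y, hy⟩]
    · simp [f, hy]
  refine ⟨f, ?_, fun n z => dif_pos z.2, hf_infty⟩
  refine .union_of_isClosed ?_ ?_ (isClosed_univ.prod hZ) (isClosed_singleton.prod isClosed_univ)
  · rw [continuousOn_iff_continuous_domRestrict]
    have hsub : Continuous fun p : ↥((univ : Set (OnePoint ℕ)) ×ˢ Z) =>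
        (p.1.1, (⟨p.1.2, p.2.2⟩ : Z)) := by
      fun_prop
    convert hconv.continuous_uncurry_onePoint.comp hsub using 1
    funext p
    exact dif_pos p.2.2
  · refine (φbar.continuous.comp continuous_snd).continuousOn.congr ?_
    rintro ⟨t, y⟩ ⟨rfl : t = ∞, -⟩
    exact hf_infty y

theorem exists_continuous_slices_tendstoUniformly {X Y : Type*} [UniformSpace X]
    [TopologicalSpace Y] [CompactSpace Y] {g : OnePoint ℕ × Y → X} {U : Set (OnePoint ℕ × Y)}
    (hU : IsOpen U) (hU_infty : {∞} ×ˢ univ ⊆ U) (hg : ContinuousOn g U) :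
    ∃ (N : ℕ) (ψ : ℕ → C(Y, X)), (∀ n ≥ N, ∀ y, ψ n y = g (n, y)) ∧
      TendstoUniformly (fun n => ⇑(ψ n)) (fun y => g (∞, y)) atTop := by
  obtain ⟨V, W, hV, -, h_infty, hW, hVW⟩ :=
    generalized_tube_lemma isCompact_singleton isCompact_univ hU hU_infty
  have hVU : V ×ˢ univ ⊆ U := (prod_mono le_rfl hW).trans hVW
  let G : C(V × Y, X) :=
    ⟨fun p => g (p.1, p.2), hg.comp_continuous (by fun_prop) fun p => hVU ⟨p.1.2, mem_univ _⟩⟩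
  obtain ⟨N, hN⟩ :=
    eventually_atTop.mp (tendsto_coe_onePoint_nat.eventually (hV.mem_nhds (h_infty rfl)))
  let slice (n : ℕ) : V := ⟨((max n N : ℕ) : OnePoint ℕ), hN _ (le_max_right n N)⟩
  have hslice : Tendsto slice atTop (𝓝 ⟨∞, h_infty rfl⟩) :=
    tendsto_subtype_rng.mpr
      (tendsto_coe_onePoint_nat.comp (tendsto_atTop_mono (le_max_left · N) tendsto_id))
  refine ⟨N, fun n => G.curry (slice n), fun n hn y => ?_, ?_⟩
  · change g (↑(max n N), y) = _
    rw [max_eq_left hn]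
  · exact ContinuousMap.tendsto_iff_tendstoUniformly.mp 
      (G.curry.continuous.tendsto _ |>.comp hslice)

theorem isANR_extensions_converge_general {X : Type} [MetricSpace X] (hX : IsANR X)
    {Y : Type} [MetricSpace Y] [CompactSpace Y] (Z : Set Y) (hZ : IsClosed Z)
    (φ : ℕ → C(Z, X)) (φl : C(Z, X))
    (hconv : TendstoUniformly (fun n => ⇑(φ n)) (⇑φl) atTop)
    (φbar : C(Y, X)) (hφbar : ∀ z : Z, φbar z.1 = φl z) :
    ∃ (N : ℕ) (ψ : ℕ → C(Y, X)),
      (∀ n ≥ N, ∀ z : Z, ψ n z.1 = φ n z) ∧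
      TendstoUniformly (fun n => ⇑(ψ n)) (⇑φbar) atTop := by
  obtain ⟨f, hf, hf_coe, hf_infty⟩ :=
    exists_continuousOn_onePoint_prod_of_tendstoUniformly hZ hconv hφbar
  have hA : IsClosed (univ ×ˢ Z ∪ {∞} ×ˢ univ : Set (OnePoint ℕ × Y)) :=
    (isClosed_univ.prod hZ).union (isClosed_singleton.prod isClosed_univ)
  obtain ⟨U, hU, hAU, g, hg, hgf⟩ := hX.exists_continuousOn_extension hA hf
  obtain ⟨N, ψ, hψ, hψ_conv⟩ :=
    exists_continuous_slices_tendstoUniformly hU (subset_union_right.trans hAU) hg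
  refine ⟨N, ψ, fun n hn z => ?_, ?_⟩
  · rw [hψ n hn, hgf (Or.inl ⟨mem_univ _, z.2⟩), hf_coe]
  · convert hψ_conv using 2 with y
    rw [hgf (Or.inr ⟨mem_singleton _, mem_univ y⟩), hf_infty]

/-- If `X` is an ANR and `φₙ → φ` uniformly on `Z` with `φ` extending to `φ̄ : Y → X`, then for
all sufficiently large `n` there are extensions `φ̄ₙ` of `φₙ` with `φ̄ₙ → φ̄` uniformly on `Y`. -/
theorem isANR_extensions_converge {X : Type} [MetricSpace X] [CompactSpace X] (hX : IsANR X)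
    {Y : Type} [MetricSpace Y] [CompactSpace Y] (Z : Set Y) (hZ : IsClosed Z)
    (φ : ℕ → C(Z, X)) (φl : C(Z, X))
    (hconv : TendstoUniformly (fun n => ⇑(φ n)) (⇑φl) atTop)
    (φbar : C(Y, X)) (hφbar : ∀ z : Z, φbar z.1 = φl z) :
    ∃ (N : ℕ) (ψ : ℕ → C(Y, X)),
      (∀ n ≥ N, ∀ z : Z, ψ n z.1 = φ n z) ∧
      TendstoUniformly (fun n => ⇑(ψ n)) (⇑φbar) atTop :=
  isANR_extensions_converge_general hX Z hZ φ φl hconv φbar hφbar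
end
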